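/- arXiv:1801.09767 — 2 statements merged into one kernel-verified Lean document; each statement's English description precedes it below -/
import Mathlib

section
/- Let H be a real Hilbert space, (e_i)_{i∈ℕ} a Hilbert basis of H, (λ_i)_{i∈ℕ} positive real numbers, and w ∈ H. Suppose there exists α₀ > 0 such that ∑_i λ_i^{α₀} ⟨w, e_i⟩² < ∞. Then for every α ∈ (0, α₀] the series w_α := ∑_i λ_i^{α/2} ⟨w, e_i⟩ e_i converges in H, and ‖w_α − w‖ → 0 as α → 0⁺. -/
/-!
The coefficients of `w_α - w` in the basis are `(λᵢ^{α/2} - 1) ⟨w, eᵢ⟩`, so by Parseval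
`‖w_α - w‖² = ∑ᵢ (λᵢ^{α/2} - 1)² ⟨w, eᵢ⟩²`. Each term tends to `0` as `α → 0⁺` and, for
`α ≤ α₀`, is dominated by `(λᵢ^{α₀} + 2) ⟨w, eᵢ⟩²`, which is summable; dominated convergence
for series concludes.
-/

open scoped InnerProductSpace

open Filter Topology

section Orthonormal

variable {ι 𝕜 E : Type*} [RCLike 𝕜] [NormedAddCommGroup E] [InnerProductSpace 𝕜 E] {v : ι → E}

theorem Orthonormal.hasSum_norm_sq_of_hasSum (hv : Orthonormal 𝕜 v) {c : ι → 𝕜} {x : E}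
    (h : HasSum (fun i => c i • v i) x) : HasSum (fun i => ‖c i‖ ^ 2) (‖x‖ ^ 2) := by
  refine (((continuous_norm.pow 2).tendsto x).comp h).congr fun s => ?_
  simpa using hv.orthogonalFamily.norm_sum c s

theorem Orthonormal.summable_smul_of_summable_norm_sq [CompleteSpace E] (hv : Orthonormal 𝕜 v)
    {c : ι → 𝕜} (hc : Summable fun i => ‖c i‖ ^ 2) : Summable fun i => c i • v i := by
  simpa using (hv.orthogonalFamily.summable_iff_norm_sq_summable c).2 hc

end Orthonormal

theorem HilbertBasis.hasSum_inner_smul {ι E : Type*} [NormedAddCommGroup E]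
    [InnerProductSpace ℝ E] (b : HilbertBasis ι ℝ E) (x : E) :
    HasSum (fun i => ⟪x, b i⟫_ℝ • b i) x := by
  simpa only [b.repr_apply_apply, real_inner_comm] using b.hasSum_repr x

theorem Orthonormal.tendsto_norm_tsum_mul_smul_sub {ι α E : Type*} [NormedAddCommGroup E]
    [InnerProductSpace ℝ E] [CompleteSpace E] {v : ι → E} (hv : Orthonormal ℝ v) {c : ι → ℝ}
    {x : E} (hx : HasSum (fun i => c i • v i) x) {l : Filter α} {m : α → ι → ℝ}
    (hm : ∀ i, Tendsto (fun a => m a i) l (𝓝 1)) {bound : ι → ℝ} (hbound : Summable bound)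
    (hdom : ∀ᶠ a in l, ∀ i, ((m a i - 1) * c i) ^ 2 ≤ bound i) :
    Tendsto (fun a => ‖∑' i, (m a i * c i) • v i - x‖) l (𝓝 0) := by
  have hdist : ∀ a, (∀ i, ((m a i - 1) * c i) ^ 2 ≤ bound i) →
      ‖∑' i, (m a i * c i) • v i - x‖ = √(∑' i, ((m a i - 1) * c i) ^ 2) := by
    intro a ha
    have hsq : Summable fun i => ((m a i - 1) * c i) ^ 2 :=
      hbound.of_nonneg_of_le (fun i => sq_nonneg _) ha
    have herr := (hv.summable_smul_of_summable_norm_sq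
      (by simpa only [Real.norm_eq_abs, sq_abs] using hsq)).hasSum
    have hsplit : HasSum (fun i => (m a i * c i) • v i) (∑' i, ((m a i - 1) * c i) • v i + x) :=
      (herr.add hx).congr_fun fun i => by rw [← add_smul]; ring_nf
    rw [hsplit.tsum_eq, add_sub_cancel_right, ← Real.sqrt_sq (norm_nonneg _),
      ← (hv.hasSum_norm_sq_of_hasSum herr).tsum_eq]
    simp only [Real.norm_eq_abs, sq_abs]
  have htsum : Tendsto (fun a => ∑' i, ((m a i - 1) * c i) ^ 2) l (𝓝 0) := by
    have h := tendsto_tsum_of_dominated_convergence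
      (f := fun a i => ((m a i - 1) * c i) ^ 2) (g := fun _ => 0) hbound
      (fun i => by simpa using (((hm i).sub_const 1).mul_const (c i)).pow 2)
      (hdom.mono fun a ha i => (Real.norm_of_nonneg (sq_nonneg _)).trans_le (ha i))
    simpa using h
  simpa using (htsum.sqrt).congr' (hdom.mono fun a ha => (hdist a ha).symm)

theorem sq_rpow_half {x : ℝ} (hx : 0 ≤ x) (a : ℝ) : (x ^ (a / 2)) ^ 2 = x ^ a := by
  rw [← Real.rpow_natCast, ← Real.rpow_mul hx]
  norm_num

theorem rpow_le_rpow_add_one {x a b : ℝ} (hx : 0 ≤ x) (ha : 0 ≤ a) (hab : a ≤ b) :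
    x ^ a ≤ x ^ b + 1 := by
  have hb : 0 ≤ x ^ b := Real.rpow_nonneg hx b
  rcases le_or_gt 1 x with h1 | h1
  · linarith [Real.rpow_le_rpow_of_exponent_le h1 hab]
  · linarith [Real.rpow_le_one hx h1.le ha]

theorem sq_rpow_half_sub_one_le {x a b : ℝ} (hx : 0 ≤ x) (ha : 0 ≤ a) (hab : a ≤ b) :
    (x ^ (a / 2) - 1) ^ 2 ≤ x ^ b + 2 := by
  have hpos : 0 ≤ x ^ (a / 2) := Real.rpow_nonneg hx _
  nlinarith [sq_rpow_half hx a, rpow_le_rpow_add_one hx ha hab]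

/-- If `∑ᵢ λᵢ^{α₀} ⟨w, eᵢ⟩² < ∞` for some `α₀ > 0`, then for every
`α ∈ (0, α₀]` the spectral power series `w_α = ∑ᵢ λᵢ^{α/2} ⟨w, eᵢ⟩ eᵢ`
converges in `H`, and `‖w_α − w‖ → 0` as `α → 0⁺`. -/
theorem spectral_power_tendsto_identity_as_order_tendsto_zero
    {H : Type*} [NormedAddCommGroup H] [InnerProductSpace ℝ H] [CompleteSpace H]
    (e : HilbertBasis ℕ ℝ H) (lam : ℕ → ℝ) (hlam : ∀ i, 0 < lam i)
    (w : H) (α₀ : ℝ) (hα₀ : 0 < α₀)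
    (hsum : Summable (fun i => lam i ^ α₀ * ⟪w, e i⟫_ℝ ^ 2)) :
    (∀ α : ℝ, 0 < α → α ≤ α₀ →
      Summable (fun i => (lam i ^ (α / 2) * ⟪w, e i⟫_ℝ) • e i)) ∧
    Filter.Tendsto
      (fun α : ℝ => ‖(∑' i, (lam i ^ (α / 2) * ⟪w, e i⟫_ℝ) • e i) - w‖)
      (nhdsWithin 0 (Set.Ioi 0)) (nhds 0) := by
  set c : ℕ → ℝ := fun i => ⟪w, e i⟫_ℝ
  have hw : HasSum (fun i => c i • e i) w := e.hasSum_inner_smul w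
  have hc : Summable fun i => c i ^ 2 := by
    simpa only [Real.norm_eq_abs, sq_abs] using (e.orthonormal.hasSum_norm_sq_of_hasSum hw).summable
  have hcoeff : ∀ α, 0 < α → α ≤ α₀ → ∀ i,
      ‖lam i ^ (α / 2) * c i‖ ^ 2 ≤ lam i ^ α₀ * c i ^ 2 + c i ^ 2 := by
    intro α hα hαα₀ i
    rw [Real.norm_eq_abs, sq_abs, mul_pow, sq_rpow_half (hlam i).le]
    nlinarith [rpow_le_rpow_add_one (hlam i).le hα.le hαα₀, sq_nonneg (c i)]
  have hlim : ∀ i, Tendsto (fun α : ℝ => lam i ^ (α / 2)) (𝓝[>] 0) (𝓝 1) := by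
    intro i
    have h := (Real.continuousAt_const_rpow (hlam i).ne').tendsto.comp
      ((continuous_id.div_const (2 : ℝ)).tendsto 0)
    simpa [Function.comp_def] using h.mono_left nhdsWithin_le_nhds
  have hdom : ∀ᶠ α in 𝓝[>] (0 : ℝ), ∀ i,
      ((lam i ^ (α / 2) - 1) * c i) ^ 2 ≤ lam i ^ α₀ * c i ^ 2 + 2 * c i ^ 2 := by
    filter_upwards [self_mem_nhdsWithin, nhdsWithin_le_nhds (eventually_le_nhds hα₀)]
      with α hα hαα₀ i
    rw [mul_pow]
    nlinarith [sq_rpow_half_sub_one_le (hlam i).le (le_of_lt hα) hαα₀, sq_nonneg (c i)]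
  exact ⟨fun α hα hαα₀ => e.orthonormal.summable_smul_of_summable_norm_sq
      ((hsum.add hc).of_nonneg_of_le (fun i => by positivity) (hcoeff α hα hαα₀)),
    e.orthonormal.tendsto_norm_tsum_mul_smul_sub hw hlim (hsum.add (hc.mul_left 2)) hdom⟩
end

section
/- For every α ∈ (0,2) and every ε > 0, the series ∑_{k=1}^∞ (1+k²)^{α+ε} · k^{−2α} / (k · log²(k+1)) diverges to infinity. (Equivalently, with a_k = 1/(√k log(k+1)), the solution u = ∑_k k^{−α} a_k sin(kx) of the zero-Dirichlet spectral fractional Poisson problem does not lie in H^{α+ε} for any ε > 0; together with its membership in H^α this shows the α-gain in Sobolev regularity for the spectral fractional Laplacian is sharp.) -/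
open Real Filter

/-!
Since `(1 + k²)^(α+ε) ≥ k^(2α+2ε)`, the `k`-th term is at least `k^(2ε-1) / log²(k+1)`,
and this exceeds `1/k` as soon as `log(k+1) ≤ k^ε`, which holds for all large `k` because
logarithms grow slower than any power. So the series eventually dominates the harmonic series.
-/

theorem Finset.sum_range_succ_eq_add_sum_Icc_one {M : Type*} [AddCommMonoid M] (f : ℕ → M)
    (N : ℕ) :
    ∑ k ∈ Finset.range (N + 1), f k = f 0 + ∑ k ∈ Finset.Icc 1 N, f k := by
  rw [Finset.range_eq_Ico, Finset.sum_eq_sum_Ico_succ_bot (by omega : 0 < N + 1), zero_add,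
    Finset.Ico_add_one_right_eq_Icc]

theorem tendsto_sum_Icc_one_atTop_of_not_summable {f : ℕ → ℝ} (hf : ∀ n, 0 ≤ f n)
    (h : ¬Summable f) : Tendsto (fun N => ∑ k ∈ Finset.Icc 1 N, f k) atTop atTop := by
  have hrange := ((not_summable_iff_tendsto_nat_atTop_of_nonneg hf).1 h).comp
    (tendsto_add_atTop_nat 1)
  refine (tendsto_atTop_add_const_left _ (-f 0) hrange).congr fun N => ?_
  simp [Finset.sum_range_succ_eq_add_sum_Icc_one]

theorem eventually_log_add_one_le_rpow {r : ℝ} (hr : 0 < r) :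
    ∀ᶠ x : ℝ in atTop, log (x + 1) ≤ x ^ r := by
  filter_upwards [(isLittleO_log_rpow_atTop hr).bound one_half_pos, eventually_ge_atTop 2]
    with x hlog hx
  rw [norm_of_nonneg (log_nonneg (by linarith)), norm_of_nonneg (by positivity)] at hlog
  calc log (x + 1) ≤ log (x ^ 2) := log_le_log (by linarith) (by nlinarith)
    _ = 2 * log x := by rw [log_pow]; norm_num
    _ ≤ x ^ r := by linarith

theorem rpow_two_mul_le_one_add_sq_rpow_mul_rpow_neg {α ε x : ℝ} (hαε : 0 ≤ α + ε)
    (hx : 0 < x) :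
    x ^ (2 * ε) ≤ (1 + x ^ 2) ^ (α + ε) * x ^ (-(2 * α)) := by
  have hsq : (x ^ 2) ^ (α + ε) = x ^ (2 * (α + ε)) := by
    rw [← rpow_natCast, ← rpow_mul hx.le]; norm_num
  calc x ^ (2 * ε) = (x ^ 2) ^ (α + ε) * x ^ (-(2 * α)) := by
        rw [hsq, ← rpow_add hx]; ring_nf
    _ ≤ (1 + x ^ 2) ^ (α + ε) * x ^ (-(2 * α)) := by gcongr; linarith

theorem one_div_le_of_log_add_one_le_rpow {α ε x : ℝ} (hαε : 0 ≤ α + ε) (hx : 0 < x)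
    (hlog : log (x + 1) ≤ x ^ ε) :
    1 / x ≤ (1 + x ^ 2) ^ (α + ε) * x ^ (-(2 * α)) / (x * log (x + 1) ^ 2) := by
  have hlog_pos : 0 < log (x + 1) := log_pos (by linarith)
  have hsq : (x ^ ε) ^ 2 = x ^ (2 * ε) := by
    rw [← rpow_natCast, ← rpow_mul hx.le]; norm_num [mul_comm]
  calc 1 / x = x ^ (2 * ε) / (x * (x ^ ε) ^ 2) := by
        rw [hsq]; field_simp
    _ ≤ x ^ (2 * ε) / (x * log (x + 1) ^ 2) := by gcongr
    _ ≤ _ := by gcongr; exact rpow_two_mul_le_one_add_sq_rpow_mul_rpow_neg hαε hx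

/-- For every `α ∈ (0,2)` and `ε > 0`, the series
`∑_{k≥1} (1+k²)^{α+ε} k^{−2α} / (k log²(k+1))` diverges to infinity;
i.e. the solution `u = ∑_k k^{−α} a_k sin(kx)` of the zero-Dirichlet
spectral fractional Poisson problem lies in no `H^{α+ε}`, so the α-gain
in Sobolev regularity is sharp. -/
theorem spectral_fractional_poisson_solution_not_in_H_alpha_plus_eps
    (α : ℝ) (hα : α ∈ Set.Ioo (0 : ℝ) 2) (ε : ℝ) (hε : 0 < ε) :
    Filter.Tendsto
      (fun N : ℕ => ∑ k ∈ Finset.Icc 1 N,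
        (1 + (k : ℝ) ^ 2) ^ (α + ε) * (k : ℝ) ^ (-(2 * α)) /
          ((k : ℝ) * Real.log ((k : ℝ) + 1) ^ 2))
      Filter.atTop Filter.atTop := by
  have hαε : 0 ≤ α + ε := by linarith [hα.1]
  refine tendsto_sum_Icc_one_atTop_of_not_summable (fun k => by positivity) fun hsum => ?_
  refine not_summable_one_div_natCast (hsum.of_norm_bounded_eventually_nat ?_)
  filter_upwards [tendsto_natCast_atTop_atTop.eventually (eventually_log_add_one_le_rpow hε),
    eventually_ge_atTop 1] with k hlog hk
  rw [norm_of_nonneg (by positivity)]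
  exact one_div_le_of_log_add_one_le_rpow hαε (by exact_mod_cast hk) hlog
end
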